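/- arXiv:1605.08258 — 4 statements merged into one kernel-verified Lean document; each statement's English description precedes it below -/
import Mathlib

section
/- Let Φ be a real constant and F : ℝ → ℝ differentiable with F'(ξ)² ≠ 1 for all ξ. Define f(x,t) = t·F(x/t) for t > 0. Then f satisfies the eikonal equation ∂f/∂t = Φ(∂f/∂x)² + (∂f/∂x)²·(∂f/∂t) for all x ∈ ℝ, t > 0 if and only if F satisfies the Clairaut equation F(ξ) − ξF'(ξ) = Φ F'(ξ)²/(1 − F'(ξ)²) for all ξ ∈ ℝ. In particular, for every real λ with λ² ≠ 1 the affine function F(ξ) = λξ + Φλ²/(1−λ²) is a solution of this Clairaut equation. -/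
/-!
Along the ray `x = ξ t` the similarity solution `f = t F(x/t)` has `∂f/∂x = F'(ξ)` and
`∂f/∂t = F(ξ) - ξ F'(ξ)`, so the eikonal equation at `(x, t)` is the linear equation
`q = Φ p² + p² q` in `q = F(ξ) - ξ F'(ξ)`, `p = F'(ξ)`; as `p² ≠ 1` it is solved by
`q = Φ p² / (1 - p²)`, which is the Clairaut equation at `ξ`.
-/

theorem eq_add_sq_mul_iff_eq_div {K : Type*} [Field K] {Φ p q : K} (hp : p ^ 2 ≠ 1) :
    q = Φ * p ^ 2 + p ^ 2 * q ↔ q = Φ * p ^ 2 / (1 - p ^ 2) := by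
  have hp' : 1 - p ^ 2 ≠ 0 := sub_ne_zero.mpr hp.symm
  rw [eq_div_iff hp']
  constructor <;> intro h <;> linear_combination h

section SelfSimilar

variable {𝕜 : Type*} [NontriviallyNormedField 𝕜]

theorem deriv_mul_comp_div_const (F : 𝕜 → 𝕜) {t : 𝕜} (ht : t ≠ 0) (x : 𝕜) :
    deriv (fun y => t * F (y / t)) x = deriv F (x / t) := by
  have hcomp : deriv (fun y => F (t⁻¹ * y)) x = t⁻¹ * deriv F (t⁻¹ * x) :=
    deriv_comp_mul_left t⁻¹ F x
  simp only [div_eq_inv_mul, deriv_const_mul_field', hcomp, mul_inv_cancel_left₀ ht]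

theorem hasDerivAt_mul_comp_const_div {F : 𝕜 → 𝕜} {x t : 𝕜} (ht : t ≠ 0)
    (hF : DifferentiableAt 𝕜 F (x / t)) :
    HasDerivAt (fun s => s * F (x / s)) (F (x / t) - x / t * deriv F (x / t)) t := by
  have hinv : HasDerivAt (fun s => x / s) (-(x / t ^ 2)) t := by
    simpa [div_eq_mul_inv, mul_comm] using ((hasDerivAt_id t).inv ht).const_mul x
  refine ((hasDerivAt_id' t).mul (hF.hasDerivAt.comp t hinv)).congr_deriv ?_
  rw [Function.comp_apply]
  field_simp
  ring

theorem eikonal_at_iff_clairaut_at {Φ : 𝕜} {F : 𝕜 → 𝕜} {x t : 𝕜} (ht : t ≠ 0)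
    (hF : DifferentiableAt 𝕜 F (x / t)) (hF' : deriv F (x / t) ^ 2 ≠ 1) :
    deriv (fun s => s * F (x / s)) t =
        Φ * deriv (fun y => t * F (y / t)) x ^ 2 +
          deriv (fun y => t * F (y / t)) x ^ 2 * deriv (fun s => s * F (x / s)) t ↔
      F (x / t) - x / t * deriv F (x / t) =
        Φ * deriv F (x / t) ^ 2 / (1 - deriv F (x / t) ^ 2) := by
  rw [(hasDerivAt_mul_comp_const_div ht hF).deriv, deriv_mul_comp_div_const F ht]
  exact eq_add_sq_mul_iff_eq_div hF'

end SelfSimilar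

/-- Setting `f(x,t) = t·F(x/t)` in the JWKB eikonal equation
`∂f/∂t = Φ(∂f/∂x)² + (∂f/∂x)²·(∂f/∂t)` is equivalent to the Clairaut equation
`F(ξ) − ξF'(ξ) = Φ F'(ξ)²/(1 − F'(ξ)²)`; moreover every affine function
`F(ξ) = λξ + Φλ²/(1−λ²)` (with `λ² ≠ 1`) solves the Clairaut equation. -/
theorem eikonal_selfsimilar_iff_clairaut
    (Φ : ℝ) (F : ℝ → ℝ) (hF : Differentiable ℝ F)
    (h1 : ∀ ξ : ℝ, (deriv F ξ) ^ 2 ≠ 1) :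
    ((∀ x t : ℝ, 0 < t →
        deriv (fun s : ℝ => s * F (x / s)) t =
          Φ * (deriv (fun y : ℝ => t * F (y / t)) x) ^ 2 +
            (deriv (fun y : ℝ => t * F (y / t)) x) ^ 2 *
              deriv (fun s : ℝ => s * F (x / s)) t)
      ↔
      (∀ ξ : ℝ, F ξ - ξ * deriv F ξ =
        Φ * (deriv F ξ) ^ 2 / (1 - (deriv F ξ) ^ 2)))
    ∧
    (∀ l : ℝ, l ^ 2 ≠ 1 →
      ∀ ξ : ℝ,
        (fun z : ℝ => l * z + Φ * l ^ 2 / (1 - l ^ 2)) ξ -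
            ξ * deriv (fun z : ℝ => l * z + Φ * l ^ 2 / (1 - l ^ 2)) ξ =
          Φ * (deriv (fun z : ℝ => l * z + Φ * l ^ 2 / (1 - l ^ 2)) ξ) ^ 2 /
            (1 - (deriv (fun z : ℝ => l * z + Φ * l ^ 2 / (1 - l ^ 2)) ξ) ^ 2)) := by
  refine ⟨⟨fun h ξ => ?_, fun h x t ht => ?_⟩, fun l _ ξ => ?_⟩
  · simpa only [div_one] using (eikonal_at_iff_clairaut_at one_ne_zero (hF _) (h1 _)).mp (h ξ 1 one_pos)
  · exact (eikonal_at_iff_clairaut_at ht.ne' (hF _) (h1 _)).mpr (h (x / t))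
  · have hslope : deriv (fun z => l * z + Φ * l ^ 2 / (1 - l ^ 2)) ξ = l :=
      ((hasDerivAt_id' ξ).const_mul l |>.add_const _ |>.deriv).trans (mul_one l)
    rw [hslope]
    ring
end

section
/- Let Φ ≠ 0 and, for p ∈ ℂ with p² ≠ 1, set ξ(p) = −2Φp/(1−p²)² and F(p) = −Φ(2p²/(1−p²)² − p²/(1−p²)). If p, q ∈ ℂ with p² ≠ 1, q² ≠ 1 satisfy ξ(p) = ξ(q) and F(p) = F(q), then p = q. (Consequently, distinct saddle branches over the same point ξ never give equal values of F, i.e. turning points between distinct branches can only occur at the branch points p = ±i/√3.) -/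
open Complex

/-! Writing `s(p) = p/(1-p²)²`, one has `ξ = -2Φ s` and `F = -Φ (p + p³) s`, so equal images give
`s(p) = s(q)` and, unless `p = q = 0`, `p + p³ = q + q³`. Clearing denominators, both equations
become `p - q` times a cofactor, and the two cofactors combine to `(p - q)²`; hence `(p - q)³ = 0`. -/

theorem eq_of_mul_one_sub_sq_sq_eq_of_add_pow_three_eq {R : Type*} [CommRing R] [IsReduced R]
    {p q : R} (hs : p * (1 - q ^ 2) ^ 2 = q * (1 - p ^ 2) ^ 2) (hc : p + p ^ 3 = q + q ^ 3) :
    p = q :=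
  sub_eq_zero.mp <| IsReduced.eq_zero _ ⟨3, by linear_combination (1 - p * q) * hc - hs⟩

section Field

variable {K : Type*} [Field K]

theorem two_mul_sq_div_one_sub_sq_sq_sub_sq_div_one_sub_sq (p : K) :
    2 * p ^ 2 / (1 - p ^ 2) ^ 2 - p ^ 2 / (1 - p ^ 2) = (p + p ^ 3) * (p / (1 - p ^ 2) ^ 2) := by
  rcases eq_or_ne (1 - p ^ 2) 0 with h | h
  · simp [h]
  · field_simp
    ring

theorem eq_of_div_one_sub_sq_sq_eq_of_mul_div_eq {p q : K} (hp : p ^ 2 ≠ 1) (hq : q ^ 2 ≠ 1)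
    (hs : p / (1 - p ^ 2) ^ 2 = q / (1 - q ^ 2) ^ 2)
    (hc : (p + p ^ 3) * (p / (1 - p ^ 2) ^ 2) = (q + q ^ 3) * (q / (1 - q ^ 2) ^ 2)) :
    p = q := by
  have hp' : (1 - p ^ 2) ^ 2 ≠ 0 := pow_ne_zero 2 (sub_ne_zero.mpr hp.symm)
  have hq' : (1 - q ^ 2) ^ 2 ≠ 0 := pow_ne_zero 2 (sub_ne_zero.mpr hq.symm)
  rcases eq_or_ne p 0 with rfl | hp0
  · exact (div_eq_zero_iff.mp (by simpa using hs.symm)).resolve_right hq' |>.symm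
  have hs0 : q / (1 - q ^ 2) ^ 2 ≠ 0 := hs ▸ div_ne_zero hp0 hp'
  rw [hs] at hc
  exact eq_of_mul_one_sub_sq_sq_eq_of_add_pow_three_eq ((div_eq_div_iff hp' hq').mp hs)
    (mul_right_cancel₀ hs0 hc)

end Field

/-- The parametrization `p ↦ (ξ(p), F(p))` of the singular solution of the
Clairaut equation, where `ξ(p) = −2Φp/(1−p²)²` and
`F(p) = −Φ(2p²/(1−p²)² − p²/(1−p²))` with `Φ ≠ 0`, is injective on
`{p : p² ≠ 1}`: distinct saddle branches over the same point `ξ` never give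
equal values of `F`. -/
theorem singular_solution_parametrization_injective
    (Φ : ℝ) (hΦ : Φ ≠ 0)
    (ξ F : ℂ → ℂ)
    (hξ : ∀ p : ℂ, ξ p = -2 * (Φ : ℂ) * p / (1 - p ^ 2) ^ 2)
    (hF : ∀ p : ℂ, F p = -(Φ : ℂ) *
      (2 * p ^ 2 / (1 - p ^ 2) ^ 2 - p ^ 2 / (1 - p ^ 2)))
    (p q : ℂ) (hp : p ^ 2 ≠ 1) (hq : q ^ 2 ≠ 1)
    (hξpq : ξ p = ξ q) (hFpq : F p = F q) :
    p = q := by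
  have hΦ' : (Φ : ℂ) ≠ 0 := ofReal_ne_zero.mpr hΦ
  simp only [hξ, mul_div_assoc] at hξpq
  simp only [hF, two_mul_sq_div_one_sub_sq_sq_sub_sq_div_one_sub_sq] at hFpq
  exact eq_of_div_one_sub_sq_sq_eq_of_mul_div_eq hp hq
    (mul_left_cancel₀ (mul_ne_zero (neg_ne_zero.mpr two_ne_zero) hΦ') hξpq)
    (mul_left_cancel₀ (neg_ne_zero.mpr hΦ') hFpq)
end

section
/- Fix Φ = 1 and let λ, p ∈ ℂ with λ² ≠ 1 and p² ≠ 1. The equation F(p) = λ ξ(p) + λ²/(1−λ²), where ξ(p) = −2p/(1−p²)² and F(p) = −(2p²/(1−p²)² − p²/(1−p²)), holds if and only if (p² + 2λp + 1)(p − λ)² = 0. Hence if p ≠ λ then p² + 2λp + 1 = 0, i.e. p = −λ ± √(λ²−1); and for real λ with 0 < λ < 1 the corresponding turning points are ξ(p) = (1/2)(λ/(λ²−1) ± i/√(1−λ²)), which have negative real part. -/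
open Complex

/-!
Clearing denominators,
`F(p) − λξ(p) − λ²/(1−λ²) = −(p² + 2λp + 1)(p − λ)² / ((1−p²)²(1−λ²))`.
If `p = −λ + s` is a root of the quadratic factor, so `s² = λ² − 1`, then `1 − p² = 2s(λ − s)` and
`(λ − s)(λ + s) = 1`, whence `ξ(p) = (λ + s)/(2(λ² − 1))`. For real `λ ∈ (0, 1)` the square root
`s = ±i√(1−λ²)` is purely imaginary, so `Re ξ(p) = λ/(2(λ² − 1)) < 0`.
-/

section Clairaut

variable {K : Type*} [Field K]

def clairautXi (p : K) : K := -2 * p / (1 - p ^ 2) ^ 2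

def clairautF (p : K) : K := -(2 * p ^ 2 / (1 - p ^ 2) ^ 2 - p ^ 2 / (1 - p ^ 2))

theorem clairautF_eq_iff {l p : K} (hl : 1 - l ^ 2 ≠ 0) (hp : 1 - p ^ 2 ≠ 0) :
    clairautF p = l * clairautXi p + l ^ 2 / (1 - l ^ 2) ↔
      (p ^ 2 + 2 * l * p + 1) * (p - l) ^ 2 = 0 := by
  have hdiff : clairautF p - (l * clairautXi p + l ^ 2 / (1 - l ^ 2)) =
      -((p ^ 2 + 2 * l * p + 1) * (p - l) ^ 2) / ((1 - p ^ 2) ^ 2 * (1 - l ^ 2)) := by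
    unfold clairautF clairautXi
    field_simp
    ring
  rw [← sub_eq_zero, hdiff, div_eq_zero_iff, neg_eq_zero, or_iff_left (by positivity)]

theorem sq_add_two_mul_add_one_eq_zero_iff {l s p : K} (hs : s ^ 2 = l ^ 2 - 1) :
    p ^ 2 + 2 * l * p + 1 = 0 ↔ p = -l + s ∨ p = -l - s := by
  have hfac : p ^ 2 + 2 * l * p + 1 = (p - (-l + s)) * (p - (-l - s)) := by
    linear_combination hs
  rw [hfac, mul_eq_zero, sub_eq_zero, sub_eq_zero]

theorem clairautXi_neg_add_of_sq_eq [CharZero K] {l s : K} (hs : s ^ 2 = l ^ 2 - 1)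
    (hs0 : s ≠ 0) : clairautXi (-l + s) = (l + s) / (2 * (l ^ 2 - 1)) := by
  have hls : (l - s) * (l + s) = 1 := by linear_combination -hs
  have hls0 : l - s ≠ 0 := left_ne_zero_of_mul_eq_one hls
  have hden : 1 - (-l + s) ^ 2 = 2 * s * (l - s) := by linear_combination hs
  rw [clairautXi, hden, ← hs, div_eq_div_iff (by simp [hs0, hls0]) (by simp [hs0])]
  linear_combination (-4 * s ^ 2 * (l - s)) * hls

end Clairaut

theorem cpow_one_div_two_sq (z : ℂ) : (z ^ ((1 : ℂ) / 2)) ^ 2 = z := by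
  rw [one_div]
  exact_mod_cast cpow_nat_inv_pow z two_ne_zero

theorem I_mul_ofReal_sq {a r : ℝ} (hr : r ^ 2 = 1 - a ^ 2) : (I * r) ^ 2 = (a : ℂ) ^ 2 - 1 := by
  have hr' : (r : ℂ) ^ 2 = 1 - (a : ℂ) ^ 2 := by exact_mod_cast hr
  linear_combination (r : ℂ) ^ 2 * I_sq - hr'

theorem clairautXi_neg_ofReal_add_I_mul {a r : ℝ} (hr : r ^ 2 = 1 - a ^ 2) (hr0 : r ≠ 0) :
    clairautXi (-(a : ℂ) + I * r) = (1 / 2 : ℂ) * (((a / (a ^ 2 - 1) : ℝ) : ℂ) - I / r) := by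
  have hs := I_mul_ofReal_sq hr
  have hr0' : (r : ℂ) ≠ 0 := ofReal_ne_zero.mpr hr0
  rw [clairautXi_neg_add_of_sq_eq hs (by simp [hr0'])]
  push_cast
  rw [← hs]
  field_simp
  linear_combination I * r * I_sq

theorem re_half_mul_ofReal_sub_I_div (x r : ℝ) :
    ((1 / 2 : ℂ) * ((x : ℂ) - I / r)).re = x / 2 := by
  simp [div_eq_inv_mul]

/-- With `Φ = 1`, `ξ(p) = −2p/(1−p²)²` and `F(p) = −(2p²/(1−p²)² − p²/(1−p²))`:
the turning-point equation `F(p) = λξ(p) + λ²/(1−λ²)` holds iff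
`(p² + 2λp + 1)(p − λ)² = 0`; hence if `p ≠ λ` then `p² + 2λp + 1 = 0`, i.e.
`p = −λ ± √(λ²−1)`; and for real `λ ∈ (0,1)` the corresponding turning points
are `ξ(p) = (1/2)(λ/(λ²−1) ± i/√(1−λ²))`, which have negative real part. -/
theorem turning_points_of_stokes_analysis
    (ξ F : ℂ → ℂ)
    (hξ : ∀ p : ℂ, ξ p = -2 * p / (1 - p ^ 2) ^ 2)
    (hF : ∀ p : ℂ, F p = -(2 * p ^ 2 / (1 - p ^ 2) ^ 2 - p ^ 2 / (1 - p ^ 2)))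
    (l p : ℂ) (hl : l ^ 2 ≠ 1) (hp : p ^ 2 ≠ 1) :
    (F p = l * ξ p + l ^ 2 / (1 - l ^ 2) ↔
      (p ^ 2 + 2 * l * p + 1) * (p - l) ^ 2 = 0) ∧
    (F p = l * ξ p + l ^ 2 / (1 - l ^ 2) → p ≠ l →
      (p ^ 2 + 2 * l * p + 1 = 0 ∧
        (p = -l + (l ^ 2 - 1) ^ ((1 : ℂ) / 2) ∨
         p = -l - (l ^ 2 - 1) ^ ((1 : ℂ) / 2)))) ∧
    (∀ a : ℝ, 0 < a → a < 1 → l = (a : ℂ) →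
      p ^ 2 + 2 * l * p + 1 = 0 →
      ((ξ p = (1 / 2 : ℂ) * (((a / (a ^ 2 - 1) : ℝ) : ℂ) +
            Complex.I / (Real.sqrt (1 - a ^ 2) : ℂ)) ∨
        ξ p = (1 / 2 : ℂ) * (((a / (a ^ 2 - 1) : ℝ) : ℂ) -
            Complex.I / (Real.sqrt (1 - a ^ 2) : ℂ))) ∧
        (ξ p).re < 0)) := by
  obtain rfl : ξ = clairautXi := funext hξ
  obtain rfl : F = clairautF := funext hF
  have key := clairautF_eq_iff (sub_ne_zero.mpr (Ne.symm hl)) (sub_ne_zero.mpr (Ne.symm hp))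
  refine ⟨key, fun h hpl => ?_, ?_⟩
  · have hq : p ^ 2 + 2 * l * p + 1 = 0 :=
      (mul_eq_zero.mp (key.mp h)).resolve_right (pow_ne_zero 2 (sub_ne_zero.mpr hpl))
    exact ⟨hq, (sq_add_two_mul_add_one_eq_zero_iff (cpow_one_div_two_sq _)).mp hq⟩
  · rintro a ha0 ha1 rfl hq
    set r := √(1 - a ^ 2)
    have hr : r ^ 2 = 1 - a ^ 2 := Real.sq_sqrt (by nlinarith)
    have hr0 : r ≠ 0 := (Real.sqrt_pos.mpr (by nlinarith)).ne'
    have hx : a / (a ^ 2 - 1) < 0 := div_neg_of_pos_of_neg ha0 (by nlinarith)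
    rcases (sq_add_two_mul_add_one_eq_zero_iff (I_mul_ofReal_sq hr)).mp hq with rfl | rfl
    · rw [clairautXi_neg_ofReal_add_I_mul hr hr0, re_half_mul_ofReal_sub_I_div]
      exact ⟨Or.inr rfl, by linarith⟩
    · rw [show -(a : ℂ) - I * r = -(a : ℂ) + I * ↑(-r) by push_cast; ring,
        clairautXi_neg_ofReal_add_I_mul (by rwa [neg_sq]) (neg_ne_zero.mpr hr0),
        re_half_mul_ofReal_sub_I_div]
      refine ⟨Or.inl ?_, by linarith⟩
      push_cast
      ring
end

section
/- Let u : [t₀, ∞) → ℝ be differentiable and satisfy u'(t) = u(t) e^{−u(t)²} with u(t₀) > 0. Then u is strictly increasing, u(t) → +∞ as t → +∞, and the asymptotic relations e^{u(t)²}/(2 t u(t)²) → 1 and u(t)/√(log t) → 1 hold as t → +∞. -/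
open Filter Set Real Asymptotics Topology

/-!
Along a solution, `E = exp (u²)` satisfies `E' = 2u²`. Hence `u²` never drops below `u(t₀)² > 0`,
so `u` stays positive and increases strictly, and `E` grows at least linearly, forcing `u → ∞`.
The quotient `H = E / (2u²)` satisfies `H' = 1 - u⁻² → 1`, so `H(t) / t → 1`. Taking logarithms,
`u² = log t + log (2u²) + o(1)`, and `log (2u²) = o(u²)` gives `u ~ √(log t)`.
-/

lemma monotoneOn_Ici_of_hasDerivAt_nonneg {a : ℝ} {f f' : ℝ → ℝ}
    (hf : ∀ t ∈ Ici a, HasDerivAt f (f' t) t) (hf'₀ : ∀ t ∈ Ioi a, 0 ≤ f' t) :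
    MonotoneOn f (Ici a) :=
  monotoneOn_of_hasDerivWithinAt_nonneg (convex_Ici a)
    (fun t ht => (hf t ht).continuousAt.continuousWithinAt)
    (by simpa only [interior_Ici] using
      fun t ht => (hf t (Ioi_subset_Ici_self ht)).hasDerivWithinAt)
    (by simpa only [interior_Ici])

lemma strictMonoOn_Ici_of_hasDerivAt_pos {a : ℝ} {f f' : ℝ → ℝ}
    (hf : ∀ t ∈ Ici a, HasDerivAt f (f' t) t) (hf'₀ : ∀ t ∈ Ioi a, 0 < f' t) :
    StrictMonoOn f (Ici a) :=
  strictMonoOn_of_hasDerivWithinAt_pos (convex_Ici a)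
    (fun t ht => (hf t ht).continuousAt.continuousWithinAt)
    (by simpa only [interior_Ici] using
      fun t ht => (hf t (Ioi_subset_Ici_self ht)).hasDerivWithinAt)
    (by simpa only [interior_Ici])

lemma isLittleO_id_of_hasDerivAt_tendsto_zero {a : ℝ} {f f' : ℝ → ℝ}
    (hf : ∀ t ∈ Ici a, HasDerivAt f (f' t) t) (hf' : Tendsto f' atTop (𝓝 0)) :
    f =o[atTop] id := by
  refine isLittleO_iff.2 fun c hc => ?_
  obtain ⟨b, hb⟩ := eventually_atTop.1 <|
    (hf'.eventually (Metric.closedBall_mem_nhds 0 (half_pos hc))).and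
      ((eventually_ge_atTop a).and (eventually_ge_atTop 0))
  have hb0 : 0 ≤ b := (hb b le_rfl).2.2
  have lipschitz : ∀ t ∈ Ici b, ‖f t - f b‖ ≤ c / 2 * ‖t - b‖ := fun t ht =>
    (convex_Ici b).norm_image_sub_le_of_norm_hasDerivWithin_le
      (fun s hs => (hf s (hb s hs).2.1).hasDerivWithinAt)
      (fun s hs => by simpa using (hb s hs).1) self_mem_Ici ht
  filter_upwards [eventually_ge_atTop b, eventually_ge_atTop (2 * ‖f b‖ / c)] with t htb htf
  have hfb : ‖f b‖ ≤ c / 2 * t := by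
    rw [div_le_iff₀ hc] at htf; linarith
  calc ‖f t‖ ≤ ‖f t - f b‖ + ‖f b‖ := norm_le_norm_sub_add _ _
    _ ≤ c / 2 * ‖t - b‖ + c / 2 * t := add_le_add (lipschitz t htb) hfb
    _ ≤ c * ‖id t‖ := by
      rw [Real.norm_eq_abs, Real.norm_eq_abs, id, abs_of_nonneg (sub_nonneg.2 htb),
        abs_of_nonneg (hb0.trans htb)]
      nlinarith

lemma tendsto_div_id_of_hasDerivAt_tendsto {a L : ℝ} {f f' : ℝ → ℝ}
    (hf : ∀ t ∈ Ici a, HasDerivAt f (f' t) t) (hf' : Tendsto f' atTop (𝓝 L)) :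
    Tendsto (fun t => f t / t) atTop (𝓝 L) := by
  have hsub : (fun t => f t - L * t) =o[atTop] id :=
    isLittleO_id_of_hasDerivAt_tendsto_zero
      (fun t ht => (hf t ht).sub ((hasDerivAt_id t).const_mul L))
      (by simpa using hf'.sub_const L)
  refine (zero_add L ▸ hsub.tendsto_div_nhds_zero.add_const L).congr' ?_
  filter_upwards [eventually_ne_atTop 0] with t ht
  simp only [id]
  field_simp
  ring

lemma tendsto_log_div_of_tendsto_exp_div {v : ℝ → ℝ} (hv : Tendsto v atTop atTop)
    (h : Tendsto (fun t => exp (v t) / (2 * t * v t)) atTop (𝓝 1)) :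
    Tendsto (fun t => log t / v t) atTop (𝓝 1) := by
  have hlog : Tendsto (fun t => log (exp (v t) / (2 * t * v t))) atTop (𝓝 0) := by
    simpa [Function.comp_def] using (continuousAt_log one_ne_zero).tendsto.comp h
  have hinv : Tendsto (fun t => (v t)⁻¹) atTop (𝓝 0) := hv.inv_tendsto_atTop
  have hlogv : Tendsto (fun t => log (v t) / v t) atTop (𝓝 0) :=
    isLittleO_log_id_atTop.tendsto_div_nhds_zero.comp hv
  have herr := ((tendsto_const_nhds (x := log 2)).mul hinv).add hlogv |>.add (hlog.mul hinv)
  rw [mul_zero, zero_add, zero_add, zero_mul] at herr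
  refine (sub_zero (1 : ℝ) ▸ herr.const_sub 1).congr' ?_
  filter_upwards [eventually_gt_atTop 0, hv.eventually_gt_atTop 0] with t ht hvt
  rw [log_div (exp_ne_zero _) (by positivity), log_exp, log_mul (by positivity) hvt.ne',
    log_mul two_ne_zero ht.ne']
  field_simp
  ring

lemma tendsto_div_sqrt_log_of_tendsto_exp_sq_div {u : ℝ → ℝ} (hu : Tendsto u atTop atTop)
    (h : Tendsto (fun t => exp (u t ^ 2) / (2 * t * u t ^ 2)) atTop (𝓝 1)) :
    Tendsto (fun t => u t / sqrt (log t)) atTop (𝓝 1) := by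
  have hratio := (tendsto_log_div_of_tendsto_exp_div
    ((tendsto_pow_atTop two_ne_zero).comp hu) h).inv₀ one_ne_zero
  rw [inv_one] at hratio
  refine (sqrt_one ▸ (continuous_sqrt.tendsto 1).comp hratio).congr' ?_
  filter_upwards [hu.eventually_ge_atTop 0] with t ht
  simp only [Function.comp_apply, inv_div]
  rw [sqrt_div (sq_nonneg _), sqrt_sq ht]

def IsPlateauSolution (t₀ : ℝ) (u : ℝ → ℝ) : Prop :=
  ∀ t ∈ Ici t₀, HasDerivAt u (u t * exp (-u t ^ 2)) t

namespace IsPlateauSolution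

variable {t₀ : ℝ} {u : ℝ → ℝ}

lemma hasDerivAt_exp_sq (hu : IsPlateauSolution t₀ u) {t : ℝ} (ht : t ∈ Ici t₀) :
    HasDerivAt (fun s => exp (u s ^ 2)) (2 * u t ^ 2) t := by
  convert ((hu t ht).fun_pow 2).exp using 1
  rw [exp_neg]
  field_simp
  ring

lemma initial_sq_le_sq (hu : IsPlateauSolution t₀ u) {t : ℝ} (ht : t ∈ Ici t₀) :
    u t₀ ^ 2 ≤ u t ^ 2 :=
  exp_le_exp.1 <| monotoneOn_Ici_of_hasDerivAt_nonneg (fun _ hs => hu.hasDerivAt_exp_sq hs)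
    (fun _ _ => by positivity) self_mem_Ici ht ht

lemma pos (hu : IsPlateauSolution t₀ u) (h0 : 0 < u t₀) {t : ℝ} (ht : t ∈ Ici t₀) :
    0 < u t := by
  by_contra! hle
  obtain ⟨c, hc, hc0⟩ := intermediate_value_Icc' ht
    (fun s hs => (hu s hs.1).continuousAt.continuousWithinAt) ⟨hle, h0.le⟩
  have := hu.initial_sq_le_sq hc.1
  rw [hc0] at this
  nlinarith

lemma strictMonoOn (hu : IsPlateauSolution t₀ u) (h0 : 0 < u t₀) : StrictMonoOn u (Ici t₀) :=
  strictMonoOn_Ici_of_hasDerivAt_pos hu fun _ ht =>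
    mul_pos (hu.pos h0 (Ioi_subset_Ici_self ht)) (exp_pos _)

lemma linear_le_exp_sq (hu : IsPlateauSolution t₀ u) {t : ℝ} (ht : t ∈ Ici t₀) :
    exp (u t₀ ^ 2) + 2 * u t₀ ^ 2 * (t - t₀) ≤ exp (u t ^ 2) := by
  have := monotoneOn_Ici_of_hasDerivAt_nonneg
    (fun s hs => (hu.hasDerivAt_exp_sq hs).fun_sub ((hasDerivAt_id s).const_mul (2 * u t₀ ^ 2)))
    (fun s hs => by linarith [hu.initial_sq_le_sq (Ioi_subset_Ici_self hs)]) self_mem_Ici ht ht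
  simp only [id] at this
  linarith

lemma tendsto_sq_atTop (hu : IsPlateauSolution t₀ u) (h0 : 0 < u t₀) :
    Tendsto (fun t => u t ^ 2) atTop atTop := by
  have hlin : Tendsto (fun t => exp (u t₀ ^ 2) + 2 * u t₀ ^ 2 * (t - t₀)) atTop atTop :=
    tendsto_atTop_add_const_left _ _ <|
      (tendsto_atTop_add_const_right _ _ tendsto_id).const_mul_atTop (by positivity)
  have hexp : Tendsto (fun t => exp (u t ^ 2)) atTop atTop :=
    tendsto_atTop_mono' _ (eventually_ge_atTop t₀ |>.mono fun _ ht => hu.linear_le_exp_sq ht) hlin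
  simpa only [Function.comp_def, log_exp] using tendsto_log_atTop.comp hexp

lemma tendsto_atTop (hu : IsPlateauSolution t₀ u) (h0 : 0 < u t₀) :
    Tendsto u atTop atTop := by
  refine (tendsto_sqrt_atTop.comp (hu.tendsto_sq_atTop h0)).congr' ?_
  filter_upwards [eventually_ge_atTop t₀] with t ht
  exact sqrt_sq (hu.pos h0 ht).le

lemma hasDerivAt_exp_sq_div (hu : IsPlateauSolution t₀ u) {t : ℝ} (ht : t ∈ Ici t₀)
    (hut : u t ≠ 0) :
    HasDerivAt (fun s => exp (u s ^ 2) / (2 * u s ^ 2)) (1 - (u t ^ 2)⁻¹) t := by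
  refine ((hu.hasDerivAt_exp_sq ht).div (((hu t ht).fun_pow 2).const_mul 2)
    (by positivity)).congr_deriv ?_
  rw [exp_neg]
  field_simp
  ring

lemma tendsto_exp_sq_div (hu : IsPlateauSolution t₀ u) (h0 : 0 < u t₀) :
    Tendsto (fun t => exp (u t ^ 2) / (2 * t * u t ^ 2)) atTop (𝓝 1) := by
  have hderiv : Tendsto (fun t => 1 - (u t ^ 2)⁻¹) atTop (𝓝 1) := by
    simpa using (hu.tendsto_sq_atTop h0).inv_tendsto_atTop.const_sub 1
  refine (tendsto_div_id_of_hasDerivAt_tendsto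
    (fun t ht => hu.hasDerivAt_exp_sq_div ht (hu.pos h0 ht).ne') hderiv).congr fun t => ?_
  rw [div_div, mul_right_comm]

end IsPlateauSolution

/-- A solution of `u' = u e^{−u²}` with `u(t₀) > 0` is strictly increasing,
tends to `+∞`, and satisfies `e^{u²}/(2tu²) → 1` and `u/√(log t) → 1` as
`t → +∞`. -/
theorem plateau_growth_ODE
    (t₀ : ℝ) (u : ℝ → ℝ)
    (hode : ∀ t ∈ Set.Ici t₀,
      HasDerivAt u (u t * Real.exp (-(u t) ^ 2)) t)
    (h0 : 0 < u t₀) :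
    StrictMonoOn u (Set.Ici t₀) ∧
    Tendsto u atTop atTop ∧
    Tendsto (fun t => Real.exp ((u t) ^ 2) / (2 * t * (u t) ^ 2))
      atTop (nhds 1) ∧
    Tendsto (fun t => u t / Real.sqrt (Real.log t)) atTop (nhds 1) := by
  have hu : IsPlateauSolution t₀ u := hode
  have hgrowth := hu.tendsto_exp_sq_div h0
  exact ⟨hu.strictMonoOn h0, hu.tendsto_atTop h0, hgrowth,
    tendsto_div_sqrt_log_of_tendsto_exp_sq_div (hu.tendsto_atTop h0) hgrowth⟩
end
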